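/- For every integer n ≥ 1, ∑_{j=1}^{n} H_{j,2}/((j+1)^2 (j+2)^2) = H_{n,2}^2 − 4H_{n,2} − H_{n,4} + 5 + 2H_{n,2}/(n+2) + 2H_{n,2}/(n+1)^2 + H_{n,2}/(n+2)^2 − 4/(n+1) − 1/(n+1)^2. Consequently, ∑_{j=1}^{n} H_{j,2}/((j+1)^2 (j+2)^2) → π⁴/60 − 2π²/3 + 5 as n → ∞. -/

import Mathlib

open Finset Filter Real Topology

/-- Generalized harmonic number `H (n, m) = ∑_{i=1}^{n} 1/i^m` as a real number. -/
noncomputable def H (n m : ℕ) : ℝ := ∑ i ∈ Finset.Icc 1 n, (1 : ℝ) / (i : ℝ) ^ m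

/-- Apéry's constant `ζ(3) = ∑_{k=1}^{∞} 1/k³`. -/
noncomputable def zeta3 : ℝ := ∑' k : ℕ, 1 / ((k : ℝ) + 1) ^ 3

/-!
The closed form `F n` on the right vanishes at `n = 0`, and after substituting
`H (n+1) m = H n m + 1/(n+1)^m` the difference `F (n+1) - F n` is the summand
`H (n+1) 2 / ((n+2)^2 (n+3)^2)`, a rational identity in `n`, `H n 2` and `H n 4`.
So the identity holds for all `n`. For the limit, `H n 2 → π²/6` and `H n 4 → π⁴/90`
while the terms with a power of `n + 1` or `n + 2` in the denominator vanish;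
`(π²/6)² - π⁴/90 = π⁴/60`.
-/

lemma H_zero (m : ℕ) : H 0 m = 0 := by simp [H]

lemma H_succ (n m : ℕ) : H (n + 1) m = H n m + 1 / ((n : ℝ) + 1) ^ m := by
  rw [H, Finset.sum_Icc_succ_top (by omega), ← H]
  push_cast
  ring

lemma H_eq_sum_range {m : ℕ} (hm : m ≠ 0) (n : ℕ) :
    H n m = ∑ i ∈ Finset.range (n + 1), (1 : ℝ) / (i : ℝ) ^ m := by
  induction n with
  | zero => simp [H_zero, zero_pow hm]
  | succ n ih => rw [H_succ, Finset.sum_range_succ, ← ih]; push_cast; ring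

lemma tendsto_H_of_hasSum {m : ℕ} (hm : m ≠ 0) {S : ℝ}
    (hS : HasSum (fun k : ℕ => (1 : ℝ) / (k : ℝ) ^ m) S) :
    Tendsto (fun n : ℕ => H n m) atTop (𝓝 S) := by
  simpa only [Function.comp_def, ← H_eq_sum_range hm] using
    hS.tendsto_sum_nat.comp (tendsto_add_atTop_nat 1)

lemma sum_Icc_H_two_div_sq_mul_sq (n : ℕ) :
    ∑ j ∈ Finset.Icc 1 n, H j 2 / (((j : ℝ) + 1) ^ 2 * ((j : ℝ) + 2) ^ 2) =
      (H n 2) ^ 2 - 4 * H n 2 - H n 4 + 5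
        + 2 * H n 2 / ((n : ℝ) + 2)
        + 2 * H n 2 / ((n : ℝ) + 1) ^ 2
        + H n 2 / ((n : ℝ) + 2) ^ 2
        - 4 / ((n : ℝ) + 1) - 1 / ((n : ℝ) + 1) ^ 2 := by
  induction n with
  | zero => norm_num [H_zero]
  | succ n ih =>
    rw [Finset.sum_Icc_succ_top (by omega), ih, H_succ n 2, H_succ n 4]
    have h1 : (n : ℝ) + 1 ≠ 0 := by positivity
    have h2 : (n : ℝ) + 2 ≠ 0 := by positivity
    have h3 : (n : ℝ) + 3 ≠ 0 := by positivity
    push_cast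
    field_simp
    ring

theorem sum_H2_div_shift1sq_shift2sq :
    (∀ n : ℕ, 1 ≤ n →
      ∑ j ∈ Finset.Icc 1 n, H j 2 / (((j : ℝ) + 1) ^ 2 * ((j : ℝ) + 2) ^ 2) =
        (H n 2) ^ 2 - 4 * H n 2 - H n 4 + 5
          + 2 * H n 2 / ((n : ℝ) + 2)
          + 2 * H n 2 / ((n : ℝ) + 1) ^ 2
          + H n 2 / ((n : ℝ) + 2) ^ 2
          - 4 / ((n : ℝ) + 1) - 1 / ((n : ℝ) + 1) ^ 2) ∧
    Tendsto (fun n : ℕ =>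
        ∑ j ∈ Finset.Icc 1 n, H j 2 / (((j : ℝ) + 1) ^ 2 * ((j : ℝ) + 2) ^ 2))
      atTop (nhds (π ^ 4 / 60 - 2 * π ^ 2 / 3 + 5)) := by
  refine ⟨fun n _ => sum_Icc_H_two_div_sq_mul_sq n, ?_⟩
  simp only [sum_Icc_H_two_div_sq_mul_sq]
  have h2 := tendsto_H_of_hasSum two_ne_zero hasSum_zeta_two
  have h4 := tendsto_H_of_hasSum four_ne_zero hasSum_zeta_four
  have hn1 : Tendsto (fun n : ℕ => (n : ℝ) + 1) atTop atTop :=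
    tendsto_atTop_add_const_right _ 1 tendsto_natCast_atTop_atTop
  have hn2 : Tendsto (fun n : ℕ => (n : ℝ) + 2) atTop atTop :=
    tendsto_atTop_add_const_right _ 2 tendsto_natCast_atTop_atTop
  have hsq {f : ℕ → ℝ} (hf : Tendsto f atTop atTop) : Tendsto (fun n => f n ^ 2) atTop atTop :=
    (tendsto_pow_atTop two_ne_zero).comp hf
  have hlim := (((((((((h2.pow 2).sub (h2.const_mul 4)).sub h4).add_const 5).add
    ((h2.const_mul 2).div_atTop hn2)).add ((h2.const_mul 2).div_atTop (hsq hn1))).add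
    (h2.div_atTop (hsq hn2))).sub (tendsto_const_nhds (x := (4 : ℝ)).div_atTop hn1)).sub
    (tendsto_const_nhds (x := (1 : ℝ)).div_atTop (hsq hn1)))
  convert hlim using 2
  ring
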